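/- arXiv:2603.19401 — 3 statements merged into one kernel-verified Lean document; each statement's English description precedes it below -/
import Mathlib

section
/- Let n ≥ 5 and k₁,…,k_n ≥ 1 be integers, and let M ≥ 1 be a real number. Suppose that for some index j₀ with 1 ≤ j₀ ≤ n the inequalities a_{j₀} ≥ M·z_{j₀}, b_{j₀} ≥ M·(y_{j₀} + z_{j₀}), c_{j₀} ≥ M·(x_{j₀} + y_{j₀}) hold. Then these three inequalities hold for every j with j₀ ≤ j ≤ n, and moreover ‖A₃(k₁)A₃(k₂)⋯A₃(k_n)‖_c ≤ (1/M)·‖B₃(k₁)B₃(k₂)⋯B₃(k_n)‖_c. -/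
/-!
The triples `u_j = (x_j, y_j, z_j)` and `v_j = (a_j, b_j, c_j)` evolve by `u ↦ A₃(k) u` and
`v ↦ B₃(k) v`, and a one-step computation shows that this simultaneous step preserves the
domination estimates as long as `u ≥ 0`. At `j = n` these triples are the second column of
`P = A₃(k₁)⋯A₃(k_n)` and the third column of `Q = B₃(k₁)⋯B₃(k_n)`. The column sums `1ᵀP` arise
from the row vector `1` by the steps `s ↦ s A₃(k)`, which preserve a cone on which the middle
entry is the largest; so `‖P‖_c = x_n + y_n + z_n`, while the domination estimates give
`M (x_n + y_n + z_n) ≤ a_n + b_n + c_n ≤ ‖Q‖_c`.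
-/

/-- The Bruin–Troubetzkoy matrix `A₃(k)` with rows `(0, k, k−1)`, `(1, 0, 0)`, `(0, 1, 1)`. -/
def A3 (k : ℤ) : Matrix (Fin 3) (Fin 3) ℝ :=
  !![0, (k : ℝ), (k : ℝ) - 1; 1, 0, 0; 0, 1, 1]

/-- The matrix `B₃(k)` with rows `(0, 1, 0)`, `(1, 0, 1)`, `(k−1, 0, k)`. -/
def B3 (k : ℤ) : Matrix (Fin 3) (Fin 3) ℝ :=
  !![0, 1, 0; 1, 0, 1; (k : ℝ) - 1, 0, (k : ℝ)]

/-- The column norm of a 3×3 real matrix: the largest `L¹`-norm of a column. -/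
noncomputable def cnorm (X : Matrix (Fin 3) (Fin 3) ℝ) : ℝ :=
  Finset.univ.sup' Finset.univ_nonempty (fun j : Fin 3 => ∑ i : Fin 3, |X i j|)

open Matrix Set

section ListProd

variable {m R : Type*} [Fintype m] [DecidableEq m] [CommSemiring R]

theorem Matrix.vecMul_list_prod_mem {C : Set (m → R)} {l : List (Matrix m m R)}
    (hl : ∀ X ∈ l, MapsTo (· ᵥ* X) C C) {w : m → R} (hw : w ∈ C) : w ᵥ* l.prod ∈ C := by
  refine List.prod_induction (fun X => MapsTo (· ᵥ* X) C C) ?_ ?_ hl hw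
  · intro X Y hX hY v hv
    simpa only [vecMul_vecMul] using hY (hX hv)
  · intro v hv
    simpa only [vecMul_one] using hv

theorem Matrix.prod_range_mulVec_of_recursion (f : ℕ → Matrix m m R) (w : m → R)
    (u : ℕ → m → R) {n : ℕ} (hn : 1 ≤ n) (h1 : u 1 = f n *ᵥ w)
    (hu : ∀ j, 1 ≤ j → j ≤ n - 1 → u (j + 1) = f (n - j) *ᵥ u j) :
    ((List.range n).map fun i => f (i + 1)).prod *ᵥ w = u n := by
  suffices h : ∀ j, 1 ≤ j → j ≤ n →
      ((List.range j).map fun i => f (n - j + i + 1)).prod *ᵥ w = u j by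
    simpa using h n hn le_rfl
  intro j hj
  induction j, hj using Nat.le_induction with
  | base =>
    intro _
    simp [h1, Nat.sub_add_cancel hn]
  | succ j hj ih =>
    intro hjn
    have hshift : (fun i => f (n - (j + 1) + (i + 1) + 1)) = fun i => f (n - j + i + 1) := by
      funext i; congr 1; omega
    rw [List.range_succ_eq_map, List.map_cons, List.map_map, List.prod_cons, ← mulVec_mulVec,
      Function.comp_def, hshift, ih (by omega), hu j hj (by omega)]
    congr 2; omega

end ListProd

theorem sum_abs_le_cnorm (X : Matrix (Fin 3) (Fin 3) ℝ) (j : Fin 3) :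
    ∑ i, |X i j| ≤ cnorm X :=
  Finset.le_sup' (fun j => ∑ i, |X i j|) (Finset.mem_univ j)

theorem cnorm_le {X : Matrix (Fin 3) (Fin 3) ℝ} {t : ℝ} (h : ∀ j, ∑ i, |X i j| ≤ t) :
    cnorm X ≤ t :=
  Finset.sup'_le _ _ fun j _ => h j

theorem A3_mulVec (K : ℤ) (u : Fin 3 → ℝ) :
    A3 K *ᵥ u = ![((K : ℝ) - 1) * u 2 + K * u 1, u 0, u 1 + u 2] := by
  ext i; fin_cases i <;> simp [A3, mulVec, dotProduct, Fin.sum_univ_three, add_comm]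

theorem B3_mulVec (K : ℤ) (v : Fin 3 → ℝ) :
    B3 K *ᵥ v = ![v 1, v 0 + v 2, ((K : ℝ) - 1) * v 0 + K * v 2] := by
  ext i; fin_cases i <;> simp [B3, mulVec, dotProduct, Fin.sum_univ_three]

theorem vecMul_A3 (K : ℤ) (s : Fin 3 → ℝ) :
    s ᵥ* A3 K = ![s 1, K * s 0 + s 2, ((K : ℝ) - 1) * s 0 + s 2] := by
  ext i; fin_cases i <;> simp [A3, vecMul, dotProduct, Fin.sum_univ_three] <;> ring

theorem A3_mulVec_nonneg {K : ℤ} (hK : (1 : ℝ) ≤ K) {u : Fin 3 → ℝ} (hu : 0 ≤ u) :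
    0 ≤ A3 K *ᵥ u := by
  have h0 : 0 ≤ u 0 := hu 0
  have h1 : 0 ≤ u 1 := hu 1
  have h2 : 0 ≤ u 2 := hu 2
  simp only [A3_mulVec, Pi.le_def, Pi.zero_apply, Fin.forall_fin_succ, cons_val_zero,
    cons_val_succ, IsEmpty.forall_iff, and_true]
  exact ⟨by nlinarith, h0, by linarith⟩

theorem mapsTo_vecMul_A3_nonneg {K : ℤ} (hK : (1 : ℝ) ≤ K) :
    MapsTo (· ᵥ* A3 K) (Ici 0) (Ici 0) := by
  intro s (hs : 0 ≤ s)
  have h0 : 0 ≤ s 0 := hs 0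
  have h1 : 0 ≤ s 1 := hs 1
  have h2 : 0 ≤ s 2 := hs 2
  simp only [mem_Ici, vecMul_A3, Pi.le_def, Pi.zero_apply, Fin.forall_fin_succ, cons_val_zero,
    cons_val_succ, IsEmpty.forall_iff, and_true]
  exact ⟨h1, by nlinarith, by nlinarith⟩

def colSumCone : Set (Fin 3 → ℝ) :=
  {s | 0 ≤ s 0 ∧ s 0 ≤ s 1 ∧ s 1 ≤ s 0 + s 2 ∧ s 2 ≤ s 1}

theorem mapsTo_vecMul_A3_colSumCone {K : ℤ} (hK : (1 : ℝ) ≤ K) :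
    MapsTo (· ᵥ* A3 K) colSumCone colSumCone := by
  rintro s ⟨h0, h01, h102, h21⟩
  simp only [colSumCone, mem_ofPred_eq, vecMul_A3, cons_val_zero, cons_val_one, cons_val_two,
    tail_cons, head_cons]
  exact ⟨by linarith, by nlinarith, by nlinarith, by nlinarith⟩

section ProdA3

variable {l : List ℤ} (hl : ∀ K ∈ l, (1 : ℝ) ≤ K)
include hl

theorem prod_A3_nonneg (i j : Fin 3) : 0 ≤ (l.map A3).prod i j := by
  have hrow : Pi.single i 1 ᵥ* (l.map A3).prod ∈ Ici 0 := by
    refine vecMul_list_prod_mem ?_ (Pi.single_nonneg.2 zero_le_one)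
    simpa using fun K hK => mapsTo_vecMul_A3_nonneg (hl K hK)
  simpa [single_one_vecMul] using hrow j

theorem cnorm_prod_A3 : cnorm (l.map A3).prod = ∑ i, (l.map A3).prod i 1 := by
  have hnonneg := prod_A3_nonneg hl
  set P := (l.map A3).prod
  have hcone : 1 ᵥ* P ∈ colSumCone := by
    refine vecMul_list_prod_mem ?_ (by simp [colSumCone])
    simpa using fun K hK => mapsTo_vecMul_A3_colSumCone (hl K hK)
  have hsum : ∀ j, ∑ i, P i j = (1 ᵥ* P) j := fun j => by
    simp [vecMul, dotProduct]
  refine le_antisymm (cnorm_le fun j => ?_) ((sum_abs_le_cnorm P 1).trans' ?_)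
  · obtain ⟨-, h01, -, h21⟩ := hcone
    simp only [abs_of_nonneg (hnonneg _ j), hsum]
    fin_cases j <;> simp [h01, h21]
  · exact Finset.sum_le_sum fun i _ => le_abs_self _

end ProdA3

def Dominates (M : ℝ) (u v : Fin 3 → ℝ) : Prop :=
  M * u 2 ≤ v 0 ∧ M * (u 1 + u 2) ≤ v 1 ∧ M * (u 0 + u 1) ≤ v 2

namespace Dominates

variable {M : ℝ} {u v : Fin 3 → ℝ}

theorem mulVec {K : ℤ} (h : Dominates M u v) (hM : 0 ≤ M) (hK : (1 : ℝ) ≤ K) (hu : 0 ≤ u) :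
    Dominates M (A3 K *ᵥ u) (B3 K *ᵥ v) := by
  obtain ⟨ha, hb, hc⟩ := h
  have hu0 : 0 ≤ M * u 0 := mul_nonneg hM (hu 0)
  simp only [Dominates, A3_mulVec, B3_mulVec, cons_val_zero, cons_val_one, cons_val_two,
    tail_cons, head_cons]
  refine ⟨hb, by linarith, ?_⟩
  nlinarith [mul_le_mul_of_nonneg_left ha (by linarith : (0 : ℝ) ≤ K - 1),
    mul_le_mul_of_nonneg_left hc (by linarith : (0 : ℝ) ≤ K)]

theorem mul_sum_le (h : Dominates M u v) (hM : 0 ≤ M) (hu : 0 ≤ u) :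
    M * ∑ i, u i ≤ ∑ i, v i := by
  obtain ⟨ha, hb, hc⟩ := h
  have hu1 : 0 ≤ M * u 1 := mul_nonneg hM (hu 1)
  have hu2 : 0 ≤ M * u 2 := mul_nonneg hM (hu 2)
  simp only [Fin.sum_univ_three]
  nlinarith

theorem mul_cnorm_prod_A3_le {l : List ℤ} (hl : ∀ K ∈ l, (1 : ℝ) ≤ K)
    {Q : Matrix (Fin 3) (Fin 3) ℝ} (hM : 0 ≤ M)
    (h : Dominates M ((l.map A3).prod.col 1) (Q.col 2)) :
    M * cnorm (l.map A3).prod ≤ cnorm Q :=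
  calc M * cnorm (l.map A3).prod = M * ∑ i, (l.map A3).prod.col 1 i := by
        rw [cnorm_prod_A3 hl]; rfl
    _ ≤ ∑ i, Q.col 2 i := h.mul_sum_le hM fun i => prod_A3_nonneg hl i 1
    _ ≤ ∑ i, |Q i 2| := Finset.sum_le_sum fun i _ => le_abs_self _
    _ ≤ cnorm Q := sum_abs_le_cnorm Q 2

end Dominates

section Recursion

variable {n : ℕ} {K : ℕ → ℤ} (hK : ∀ j, 1 ≤ j → j ≤ n - 1 → (1 : ℝ) ≤ K j) {u v : ℕ → Fin 3 → ℝ}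
  (hu : ∀ j, 1 ≤ j → j ≤ n - 1 → u (j + 1) = A3 (K j) *ᵥ u j)
include hK hu

theorem nonneg_of_A3_recursion (h₁ : 0 ≤ u 1) : ∀ j, 1 ≤ j → j ≤ n → 0 ≤ u j := by
  intro j hj
  induction j, hj using Nat.le_induction with
  | base => exact fun _ => h₁
  | succ j hj ih =>
    intro hjn
    rw [hu j hj (by omega)]
    exact A3_mulVec_nonneg (hK j hj (by omega)) (ih (by omega))

theorem dominates_of_recursion {M : ℝ} (hM : 0 ≤ M) (hu₀ : ∀ j, 1 ≤ j → j ≤ n → 0 ≤ u j)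
    (hv : ∀ j, 1 ≤ j → j ≤ n - 1 → v (j + 1) = B3 (K j) *ᵥ v j) {j₀ : ℕ} (hj₀ : 1 ≤ j₀)
    (h₀ : Dominates M (u j₀) (v j₀)) : ∀ j, j₀ ≤ j → j ≤ n → Dominates M (u j) (v j) := by
  intro j hj
  induction j, hj using Nat.le_induction with
  | base => exact fun _ => h₀
  | succ j hj ih =>
    intro hjn
    rw [hu j (by omega) (by omega), hv j (by omega) (by omega)]
    exact (ih (by omega)).mulVec hM (hK j (by omega) (by omega)) (hu₀ j (by omega) (by omega))

end Recursion

theorem induction_on_recursion_general (n : ℕ) (k : ℕ → ℤ)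
    (hk : ∀ i, 1 ≤ i → i ≤ n → 1 ≤ k i)
    (x y z a b c : ℕ → ℝ)
    (hx1 : x 1 = (k n : ℝ)) (hy1 : y 1 = 0) (hz1 : z 1 = 1)
    (ha1 : a 1 = 0) (hb1 : b 1 = 1) (hc1 : c 1 = (k n : ℝ))
    (hx : ∀ j, 1 ≤ j → j ≤ n - 1 → x (j + 1) = ((k (n - j) : ℝ) - 1) * z j + (k (n - j) : ℝ) * y j)
    (hy : ∀ j, 1 ≤ j → j ≤ n - 1 → y (j + 1) = x j)
    (hz : ∀ j, 1 ≤ j → j ≤ n - 1 → z (j + 1) = y j + z j)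
    (ha : ∀ j, 1 ≤ j → j ≤ n - 1 → a (j + 1) = b j)
    (hb : ∀ j, 1 ≤ j → j ≤ n - 1 → b (j + 1) = a j + c j)
    (hc : ∀ j, 1 ≤ j → j ≤ n - 1 → c (j + 1) = ((k (n - j) : ℝ) - 1) * a j + (k (n - j) : ℝ) * c j)
    (M : ℝ) (hM : 1 ≤ M)
    (j₀ : ℕ) (hj₀ : 1 ≤ j₀) (hj₀n : j₀ ≤ n)
    (hA : a j₀ ≥ M * z j₀) (hB : b j₀ ≥ M * (y j₀ + z j₀)) (hC : c j₀ ≥ M * (x j₀ + y j₀)) :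
    (∀ j, j₀ ≤ j → j ≤ n →
      a j ≥ M * z j ∧ b j ≥ M * (y j + z j) ∧ c j ≥ M * (x j + y j)) ∧
    cnorm (((List.range n).map (fun i => A3 (k (i + 1)))).prod) ≤
      (1 / M) * cnorm (((List.range n).map (fun i => B3 (k (i + 1)))).prod) := by
  have hn : 1 ≤ n := hj₀.trans hj₀n
  have hK : ∀ j, 1 ≤ j → j ≤ n → (1 : ℝ) ≤ k j := fun j h1 h2 => by exact_mod_cast hk j h1 h2
  have hK' : ∀ j, 1 ≤ j → j ≤ n - 1 → (1 : ℝ) ≤ k (n - j) := fun j h1 h2 =>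
    hK _ (by omega) (by omega)
  set u : ℕ → Fin 3 → ℝ := fun j => ![x j, y j, z j]
  set v : ℕ → Fin 3 → ℝ := fun j => ![a j, b j, c j]
  have hu₁ : u 1 = A3 (k n) *ᵥ Pi.single 1 1 := by
    ext i; fin_cases i <;> simp [u, A3, hx1, hy1, hz1]
  have hv₁ : v 1 = B3 (k n) *ᵥ Pi.single 2 1 := by
    ext i; fin_cases i <;> simp [v, B3, ha1, hb1, hc1]
  have hu : ∀ j, 1 ≤ j → j ≤ n - 1 → u (j + 1) = A3 (k (n - j)) *ᵥ u j := fun j h1 h2 => by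
    simp [u, A3_mulVec, hx j h1 h2, hy j h1 h2, hz j h1 h2]
  have hv : ∀ j, 1 ≤ j → j ≤ n - 1 → v (j + 1) = B3 (k (n - j)) *ᵥ v j := fun j h1 h2 => by
    simp [v, B3_mulVec, ha j h1 h2, hb j h1 h2, hc j h1 h2]
  have hu₀ := nonneg_of_A3_recursion (K := fun j => k (n - j)) hK' hu
    (hu₁ ▸ A3_mulVec_nonneg (hK n hn le_rfl) (Pi.single_nonneg.2 zero_le_one))
  have hdom := dominates_of_recursion hK' hu (by linarith) hu₀ hv hj₀ ⟨hA, hB, hC⟩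
  refine ⟨hdom, ?_⟩
  have hP := prod_range_mulVec_of_recursion (fun i => A3 (k i)) _ u hn hu₁ hu
  have hQ := prod_range_mulVec_of_recursion (fun i => B3 (k i)) _ v hn hv₁ hv
  rw [mulVec_single_one] at hP hQ
  rw [one_div, inv_mul_eq_div, le_div_iff₀' (by linarith)]
  have hl : ∀ K ∈ (List.range n).map (fun i => k (i + 1)), (1 : ℝ) ≤ K := by
    simpa using fun i hi => hK (i + 1) (by omega) (by omega)
  have hmap : (List.range n).map (fun i => A3 (k (i + 1))) =
      ((List.range n).map fun i => k (i + 1)).map A3 := by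
    rw [List.map_map]; rfl
  rw [hmap] at hP ⊢
  exact Dominates.mul_cnorm_prod_A3_le hl (by linarith) (hP ▸ hQ ▸ hdom n hj₀n le_rfl)

/-- Lemma on the recursion: if the domination estimates hold at some index `j₀`, they hold
for all later indices, and the column norm of the `A₃` product is at most `1/M` times that
of the `B₃` product.  The sequences `(x_j, y_j, z_j)` and `(a_j, b_j, c_j)` are respectively
the second column of `A₃(k_{n−j+1})⋯A₃(k_n)` and the third column of `B₃(k_{n−j+1})⋯B₃(k_n)`,
here described by their seeds and recursions.  The entries `k₁, …, k_n` are `k 1, …, k n`. -/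
theorem induction_on_recursion (n : ℕ) (hn : 5 ≤ n) (k : ℕ → ℤ)
    (hk : ∀ i, 1 ≤ i → i ≤ n → 1 ≤ k i)
    (x y z a b c : ℕ → ℝ)
    (hx1 : x 1 = (k n : ℝ)) (hy1 : y 1 = 0) (hz1 : z 1 = 1)
    (ha1 : a 1 = 0) (hb1 : b 1 = 1) (hc1 : c 1 = (k n : ℝ))
    (hx : ∀ j, 1 ≤ j → j ≤ n - 1 → x (j + 1) = ((k (n - j) : ℝ) - 1) * z j + (k (n - j) : ℝ) * y j)
    (hy : ∀ j, 1 ≤ j → j ≤ n - 1 → y (j + 1) = x j)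
    (hz : ∀ j, 1 ≤ j → j ≤ n - 1 → z (j + 1) = y j + z j)
    (ha : ∀ j, 1 ≤ j → j ≤ n - 1 → a (j + 1) = b j)
    (hb : ∀ j, 1 ≤ j → j ≤ n - 1 → b (j + 1) = a j + c j)
    (hc : ∀ j, 1 ≤ j → j ≤ n - 1 → c (j + 1) = ((k (n - j) : ℝ) - 1) * a j + (k (n - j) : ℝ) * c j)
    (M : ℝ) (hM : 1 ≤ M)
    (j₀ : ℕ) (hj₀ : 1 ≤ j₀) (hj₀n : j₀ ≤ n)
    (hA : a j₀ ≥ M * z j₀) (hB : b j₀ ≥ M * (y j₀ + z j₀)) (hC : c j₀ ≥ M * (x j₀ + y j₀)) :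
    (∀ j, j₀ ≤ j → j ≤ n →
      a j ≥ M * z j ∧ b j ≥ M * (y j + z j) ∧ c j ≥ M * (x j + y j)) ∧
    cnorm (((List.range n).map (fun i => A3 (k (i + 1)))).prod) ≤
      (1 / M) * cnorm (((List.range n).map (fun i => B3 (k (i + 1)))).prod) :=
  induction_on_recursion_general n k hk x y z a b c hx1 hy1 hz1 ha1 hb1 hc1 hx hy hz ha hb hc M hM
    j₀ hj₀ hj₀n hA hB hC
end

section
/- Let m₀ = 15 and M = 8997/8668 (so M > 1). Let n ≥ 1 and k₁,…,k_n ≥ 1 be integers. Suppose there exist r pairwise disjoint blocks of m₀ consecutive indices in {1,…,n}, i.e. indices 1 ≤ s₁ < s₂ < ⋯ < s_r with s_t + m₀ ≤ s_{t+1} for 1 ≤ t < r and s_r + m₀ − 1 ≤ n, such that k_i = 2 for every index i belonging to one of the blocks {s_t, s_t+1, …, s_t+m₀−1}. Then ‖A₃(k₁)A₃(k₂)⋯A₃(k_n)‖_c ≤ M^{−r} · ‖B₃(k₁)B₃(k₂)⋯B₃(k_n)‖_c. -/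
def stepA (kk : ℤ) (v : ℝ × ℝ × ℝ) : ℝ × ℝ × ℝ :=
  (v.2.1, (kk : ℝ) * v.1 + v.2.2, ((kk : ℝ) - 1) * v.1 + v.2.2)

def stepB (kk : ℤ) (w : ℝ × ℝ × ℝ) : ℝ × ℝ × ℝ :=
  (w.2.1 + ((kk : ℝ) - 1) * w.2.2, w.1, w.2.1 + (kk : ℝ) * w.2.2)

def vA (k : ℕ → ℤ) : ℕ → ℝ × ℝ × ℝ
  | 0 => (1, 1, 1)
  | (j + 1) => stepA (k (j + 1)) (vA k j)

def wB (k : ℕ → ℤ) : ℕ → ℝ × ℝ × ℝ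
  | 0 => (1, 1, 1)
  | (j + 1) => stepB (k (j + 1)) (wB k j)

lemma vA_succ (k : ℕ → ℤ) (m : ℕ) : vA k (m + 1) = stepA (k (m + 1)) (vA k m) := rfl
lemma wB_succ (k : ℕ → ℤ) (m : ℕ) : wB k (m + 1) = stepB (k (m + 1)) (wB k m) := rfl

def smul3 (c : ℝ) (v : ℝ × ℝ × ℝ) : ℝ × ℝ × ℝ := (c * v.1, c * v.2.1, c * v.2.2)

lemma stepA_smul (kk : ℤ) (c : ℝ) (v : ℝ × ℝ × ℝ) :
    stepA kk (smul3 c v) = smul3 c (stepA kk v) := by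
  simp only [stepA, smul3, Prod.mk.injEq]
  refine ⟨trivial, by ring, by ring⟩

lemma smul3_smul3 (a b : ℝ) (v : ℝ × ℝ × ℝ) : smul3 a (smul3 b v) = smul3 (a * b) v := by
  simp only [smul3, Prod.mk.injEq]
  refine ⟨by ring, by ring, by ring⟩

lemma smul3_one (v : ℝ × ℝ × ℝ) : smul3 1 v = v := by
  simp only [smul3, one_mul]

def InvBT (v w : ℝ × ℝ × ℝ) : Prop :=
  0 ≤ v.1 ∧ 0 ≤ v.2.1 ∧ 0 ≤ v.2.2 ∧ 0 ≤ w.1 ∧ 0 ≤ w.2.1 ∧ 0 ≤ w.2.2 ∧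
  v.1 ≤ w.2.2 ∧ v.2.1 ≤ w.2.2 ∧ v.2.2 ≤ w.2.2 ∧
  v.2.2 ≤ w.1 + w.2.1 ∧ v.1 + v.2.2 ≤ w.2.1 + w.2.2 ∧
  w.1 ≤ w.2.2 ∧ w.2.1 ≤ w.2.2

lemma inv_step (kk : ℤ) (hkk : 1 ≤ kk) (v w : ℝ × ℝ × ℝ) (h : InvBT v w) :
    InvBT (stepA kk v) (stepB kk w) := by
  obtain ⟨h1, h2, h3, h4, h5, h6, h7, h8, h9, h10, h11, h12, h13⟩ := h
  have hk1 : (1 : ℝ) ≤ (kk : ℝ) := by exact_mod_cast hkk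
  have c1 : 0 ≤ ((kk : ℝ) - 1) * (w.2.2 - v.1) := mul_nonneg (by linarith) (by linarith)
  have c2 : 0 ≤ ((kk : ℝ) - 1) * v.1 := mul_nonneg (by linarith) h1
  have c3 : 0 ≤ ((kk : ℝ) - 1) * w.2.2 := mul_nonneg (by linarith) h6
  unfold InvBT stepA stepB
  dsimp only
  refine ⟨?_, ?_, ?_, ?_, ?_, ?_, ?_, ?_, ?_, ?_, ?_, ?_, ?_⟩ <;> nlinarith [c1, c2, c3]

lemma inv_gain (v w : ℝ × ℝ × ℝ) (h : InvBT v w) :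
    InvBT (smul3 (8997 / 8668) (stepA 2 (stepA 2 (stepA 2 v))))
      (stepB 2 (stepB 2 (stepB 2 w))) := by
  obtain ⟨h1, h2, h3, h4, h5, h6, h7, h8, h9, h10, h11, h12, h13⟩ := h
  unfold InvBT stepA stepB smul3
  push_cast
  norm_num
  refine ⟨?_, ?_, ?_, ?_, ?_, ?_, ?_, ?_, ?_, ?_, ?_, ?_, ?_⟩ <;> linarith

lemma list_prod_nonneg (L : List (Matrix (Fin 3) (Fin 3) ℝ))
    (h : ∀ X ∈ L, ∀ i j, 0 ≤ X i j) : ∀ i j, 0 ≤ L.prod i j := by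
  induction L with
  | nil =>
    intro i j
    simp only [List.prod_nil, Matrix.one_apply]
    split <;> norm_num
  | cons X T ih =>
    intro i j
    rw [List.prod_cons, Matrix.mul_apply]
    refine Finset.sum_nonneg fun l _ => mul_nonneg (h X (by simp) i l) ?_
    exact ih (fun Y hY => h Y (by simp [hY])) l j

lemma A3_nonneg (kk : ℤ) (hkk : 1 ≤ kk) : ∀ i j, 0 ≤ A3 kk i j := by
  have h1 : (1 : ℝ) ≤ (kk : ℝ) := by exact_mod_cast hkk
  intro i j
  fin_cases i <;> fin_cases j <;> simp [A3, Matrix.vecHead, Matrix.vecTail] <;> linarith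

lemma B3_nonneg (kk : ℤ) (hkk : 1 ≤ kk) : ∀ i j, 0 ≤ B3 kk i j := by
  have h1 : (1 : ℝ) ≤ (kk : ℝ) := by exact_mod_cast hkk
  intro i j
  fin_cases i <;> fin_cases j <;> simp [B3, Matrix.vecHead, Matrix.vecTail] <;> linarith

lemma colsumA (k : ℕ → ℤ) (n : ℕ) :
    (∑ i, (((List.range n).map (fun i => A3 (k (i + 1)))).prod) i 0 = (vA k n).1) ∧
    (∑ i, (((List.range n).map (fun i => A3 (k (i + 1)))).prod) i 1 = (vA k n).2.1) ∧
    (∑ i, (((List.range n).map (fun i => A3 (k (i + 1)))).prod) i 2 = (vA k n).2.2) := by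
  induction n with
  | zero =>
    simp [vA, Matrix.one_apply, Fin.sum_univ_three]
  | succ n ih =>
    obtain ⟨ih0, ih1, ih2⟩ := ih
    rw [List.range_succ, List.map_append, List.prod_append]
    simp only [List.map_cons, List.map_nil, List.prod_cons, List.prod_nil, mul_one]
    simp only [Matrix.mul_apply, Fin.sum_univ_three, A3, Matrix.cons_val', Matrix.cons_val_zero,
      Matrix.cons_val_one, Matrix.head_cons, Matrix.empty_val', Matrix.cons_val_fin_one,
      Matrix.head_fin_const, Matrix.cons_val_two, Matrix.tail_cons, Matrix.of_apply] at *
    rw [vA]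
    simp only [stepA]
    refine ⟨by linear_combination ih1, by linear_combination ((k (n + 1) : ℝ)) * ih0 + ih2,
      by linear_combination ((k (n + 1) : ℝ) - 1) * ih0 + ih2⟩

lemma colsumB (k : ℕ → ℤ) (n : ℕ) :
    (∑ i, (((List.range n).map (fun i => B3 (k (i + 1)))).prod) i 0 = (wB k n).1) ∧
    (∑ i, (((List.range n).map (fun i => B3 (k (i + 1)))).prod) i 1 = (wB k n).2.1) ∧
    (∑ i, (((List.range n).map (fun i => B3 (k (i + 1)))).prod) i 2 = (wB k n).2.2) := by
  induction n with
  | zero =>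
    simp [wB, Matrix.one_apply, Fin.sum_univ_three]
  | succ n ih =>
    obtain ⟨ih0, ih1, ih2⟩ := ih
    rw [List.range_succ, List.map_append, List.prod_append]
    simp only [List.map_cons, List.map_nil, List.prod_cons, List.prod_nil, mul_one]
    simp only [Matrix.mul_apply, Fin.sum_univ_three, B3, Matrix.cons_val', Matrix.cons_val_zero,
      Matrix.cons_val_one, Matrix.head_cons, Matrix.empty_val', Matrix.cons_val_fin_one,
      Matrix.head_fin_const, Matrix.cons_val_two, Matrix.tail_cons, Matrix.of_apply] at *
    rw [wB]
    simp only [stepB]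
    refine ⟨by linear_combination ih1 + ((k (n + 1) : ℝ) - 1) * ih2, by linear_combination ih0,
      by linear_combination ih1 + ((k (n + 1) : ℝ)) * ih2⟩

/-- With `m₀ = 15` and `M = 8997/8668 > 1`: if there are `r` pairwise disjoint blocks of
`m₀` consecutive indices in `{1, …, n}` on which `k_i = 2` (blocks starting at
`s 1 < s 2 < ⋯ < s r`), then the column norm of `A₃(k₁)⋯A₃(k_n)` is at most `M^{-r}` times
the column norm of `B₃(k₁)⋯B₃(k_n)`.  The entries `k₁, …, k_n` are `k 1, …, k n`. -/
theorem repeated_blocks_domination (n : ℕ) (hn : 1 ≤ n) (k : ℕ → ℤ)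
    (hk : ∀ i, 1 ≤ i → i ≤ n → 1 ≤ k i)
    (r : ℕ) (s : ℕ → ℕ)
    (hs1 : 1 ≤ s 1)
    (hmono : ∀ t, 1 ≤ t → t < r → s t + 15 ≤ s (t + 1))
    (hlast : s r + 15 - 1 ≤ n)
    (hblocks : ∀ t, 1 ≤ t → t ≤ r → ∀ i, s t ≤ i → i ≤ s t + 15 - 1 → k i = 2) :
    cnorm (((List.range n).map (fun i => A3 (k (i + 1)))).prod) ≤
      ((8997 : ℝ) / 8668) ^ (-(r : ℤ)) *
        cnorm (((List.range n).map (fun i => B3 (k (i + 1)))).prod) := by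
  -- chain lemma for the block starts
  have hchain : ∀ t2, t2 ≤ r → ∀ t1, 1 ≤ t1 → t1 < t2 → s t1 + 15 ≤ s t2 := by
    intro t2
    induction t2 with
    | zero => omega
    | succ m ihm =>
      intro hm t1 h1 h1m
      rcases Nat.lt_or_ge t1 m with hlt | hge
      · have h2 := ihm (by omega) t1 h1 hlt
        have h3 := hmono m (by omega) (by omega)
        omega
      · have : t1 = m := by omega
        subst this
        exact hmono t1 h1 (by omega)
  have hpos : ∀ t, 1 ≤ t → t ≤ r → 1 ≤ s t := by
    intro t h1 h2
    rcases Nat.lt_or_ge 1 t with h | h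
    · have := hchain t h2 1 le_rfl h
      omega
    · have : t = 1 := by omega
      subst this; exact hs1
  set M : ℝ := (8997 : ℝ) / 8668 with hM
  -- the main induction
  have main : ∀ j, j ≤ n →
      InvBT (smul3 (M ^ (((Finset.Icc 1 r).filter (fun t => s t + 2 ≤ j)).card)) (vA k j))
        (wB k j) := by
    intro j
    induction j using Nat.strong_induction_on with
    | _ j ih =>
      intro hjn
      rcases j with _ | j
      · have hfe : ((Finset.Icc 1 r).filter (fun t => s t + 2 ≤ 0)) = ∅ := by
          apply Finset.filter_false_of_mem
          intro t ht
          omega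
        rw [hfe]
        simp only [Finset.card_empty, pow_zero, smul3_one]
        unfold InvBT vA wB
        norm_num
      · by_cases hb : ∃ t, 1 ≤ t ∧ t ≤ r ∧ s t + 2 = j + 1
        · obtain ⟨t, ht1, htr, hts⟩ := hb
          have hst : 1 ≤ s t := hpos t ht1 htr
          have hj : j + 1 = (s t - 1) + 3 := by omega
          have e1 : k (s t - 1 + 1) = 2 := hblocks t ht1 htr _ (by omega) (by omega)
          have e2 : k (s t - 1 + 2) = 2 := hblocks t ht1 htr _ (by omega) (by omega)
          have e3 : k (s t - 1 + 3) = 2 := hblocks t ht1 htr _ (by omega) (by omega)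
          have hv : vA k (s t - 1 + 3) = stepA 2 (stepA 2 (stepA 2 (vA k (s t - 1)))) := by
            have g1 := vA_succ k (s t - 1)
            have g2 := vA_succ k (s t - 1 + 1)
            have g3 := vA_succ k (s t - 1 + 2)
            rw [show s t - 1 + 1 + 1 = s t - 1 + 2 from by omega] at g2
            rw [show s t - 1 + 2 + 1 = s t - 1 + 3 from by omega] at g3
            rw [g3, g2, g1, e1, e2, e3]
          have hw : wB k (s t - 1 + 3) = stepB 2 (stepB 2 (stepB 2 (wB k (s t - 1)))) := by
            have g1 := wB_succ k (s t - 1)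
            have g2 := wB_succ k (s t - 1 + 1)
            have g3 := wB_succ k (s t - 1 + 2)
            rw [show s t - 1 + 1 + 1 = s t - 1 + 2 from by omega] at g2
            rw [show s t - 1 + 2 + 1 = s t - 1 + 3 from by omega] at g3
            rw [g3, g2, g1, e1, e2, e3]
          have hcard1 : ((Finset.Icc 1 r).filter (fun u => s u + 2 ≤ j + 1)).card = t := by
            have hset : ((Finset.Icc 1 r).filter (fun u => s u + 2 ≤ j + 1)) =
                Finset.Icc 1 t := by
              ext u
              simp only [Finset.mem_filter, Finset.mem_Icc]
              constructor
              · rintro ⟨⟨hu1, hu2⟩, hu3⟩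
                refine ⟨hu1, ?_⟩
                by_contra hgt
                push_neg at hgt
                have := hchain u hu2 t ht1 hgt
                omega
              · rintro ⟨hu1, hu2⟩
                refine ⟨⟨hu1, le_trans hu2 htr⟩, ?_⟩
                rcases Nat.lt_or_ge u t with hlt | hge
                · have := hchain t htr u hu1 hlt
                  omega
                · have : u = t := by omega
                  subst this
                  omega
            rw [hset, Nat.card_Icc]
            omega
          have hcard0 : ((Finset.Icc 1 r).filter (fun u => s u + 2 ≤ s t - 1)).card = t - 1 := by
            have hset : ((Finset.Icc 1 r).filter (fun u => s u + 2 ≤ s t - 1)) =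
                Finset.Icc 1 (t - 1) := by
              ext u
              simp only [Finset.mem_filter, Finset.mem_Icc]
              constructor
              · rintro ⟨⟨hu1, hu2⟩, hu3⟩
                refine ⟨hu1, ?_⟩
                by_contra hgt
                push_neg at hgt
                have hut : t ≤ u := by omega
                rcases Nat.lt_or_ge t u with hlt | hge
                · have := hchain u hu2 t ht1 hlt
                  omega
                · have : u = t := by omega
                  subst this
                  omega
              · rintro ⟨hu1, hu2⟩
                have hut : u < t := by omega
                have := hchain t htr u hu1 hut
                refine ⟨⟨hu1, by omega⟩, by omega⟩
            rw [hset, Nat.card_Icc]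
            omega
          have IH := ih (s t - 1) (by omega) (by omega)
          rw [hcard0] at IH
          have G := inv_gain _ _ IH
          rw [stepA_smul, stepA_smul, stepA_smul, smul3_smul3] at G
          have hpowM : M * M ^ (t - 1) = M ^ t := by
            rw [← pow_succ']
            congr 1
            omega
          rw [hpowM] at G
          rw [hcard1, hj, hv, hw]
          exact G
        · have hcard : ((Finset.Icc 1 r).filter (fun u => s u + 2 ≤ j + 1)).card =
              ((Finset.Icc 1 r).filter (fun u => s u + 2 ≤ j)).card := by
            congr 1
            ext u
            simp only [Finset.mem_filter, Finset.mem_Icc]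
            constructor
            · rintro ⟨⟨hu1, hu2⟩, hu3⟩
              refine ⟨⟨hu1, hu2⟩, ?_⟩
              have : s u + 2 ≠ j + 1 := fun hc => hb ⟨u, hu1, hu2, hc⟩
              omega
            · rintro ⟨⟨hu1, hu2⟩, hu3⟩
              exact ⟨⟨hu1, hu2⟩, by omega⟩
          have IH := ih j (by omega) (by omega)
          have hk1 : 1 ≤ k (j + 1) := hk (j + 1) (by omega) hjn
          have G := inv_step (k (j + 1)) hk1 _ _ IH
          rw [stepA_smul] at G
          rw [hcard, vA_succ, wB_succ]
          exact G
  have fin := main n le_rfl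
  have hcardn : ((Finset.Icc 1 r).filter (fun t => s t + 2 ≤ n)).card = r := by
    have hset : ((Finset.Icc 1 r).filter (fun t => s t + 2 ≤ n)) = Finset.Icc 1 r := by
      apply Finset.filter_true_of_mem
      intro t ht
      rw [Finset.mem_Icc] at ht
      rcases Nat.lt_or_ge t r with hlt | hge
      · have := hchain r le_rfl t ht.1 hlt
        omega
      · have : t = r := by omega
        subst this
        omega
    rw [hset, Nat.card_Icc]
    omega
  rw [hcardn] at fin
  obtain ⟨-, -, -, -, -, -, f7, f8, f9, -, -, -, -⟩ := fin
  simp only [smul3] at f7 f8 f9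
  have hMpow : (0 : ℝ) < M ^ r := by positivity
  have hMinv : (0 : ℝ) ≤ (M ^ r)⁻¹ := by positivity
  obtain ⟨a0, a1, a2⟩ := colsumA k n
  obtain ⟨b0, b1, b2⟩ := colsumB k n
  have hPA : ∀ i j, 0 ≤ (((List.range n).map (fun i => A3 (k (i + 1)))).prod) i j := by
    apply list_prod_nonneg
    intro X hX
    rw [List.mem_map] at hX
    obtain ⟨i, hi, rfl⟩ := hX
    rw [List.mem_range] at hi
    exact A3_nonneg _ (hk (i + 1) (by omega) (by omega))
  have hPB : ∀ i j, 0 ≤ (((List.range n).map (fun i => B3 (k (i + 1)))).prod) i j := by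
    apply list_prod_nonneg
    intro X hX
    rw [List.mem_map] at hX
    obtain ⟨i, hi, rfl⟩ := hX
    rw [List.mem_range] at hi
    exact B3_nonneg _ (hk (i + 1) (by omega) (by omega))
  -- the B-side column 2 sum is at most cnorm of the B product
  have hBle : (wB k n).2.2 ≤ cnorm (((List.range n).map (fun i => B3 (k (i + 1)))).prod) := by
    rw [← b2]
    have := Finset.le_sup' (fun j : Fin 3 =>
      ∑ i : Fin 3, |(((List.range n).map (fun i => B3 (k (i + 1)))).prod) i j|)
      (Finset.mem_univ (2 : Fin 3))
    calc ∑ i, (((List.range n).map (fun i => B3 (k (i + 1)))).prod) i 2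
        = ∑ i, |(((List.range n).map (fun i => B3 (k (i + 1)))).prod) i 2| := by
          exact Finset.sum_congr rfl fun i _ => (abs_of_nonneg (hPB i 2)).symm
      _ ≤ _ := this
  have key : ∀ a : ℝ, M ^ r * a ≤ (wB k n).2.2 →
      a ≤ M ^ (-(r : ℤ)) * cnorm (((List.range n).map (fun i => B3 (k (i + 1)))).prod) := by
    intro a ha
    have h1 : a ≤ (M ^ r)⁻¹ * (wB k n).2.2 := by
      have h := mul_le_mul_of_nonneg_left ha hMinv
      rwa [inv_mul_cancel_left₀ (ne_of_gt hMpow)] at h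
    have h2 : (M ^ r)⁻¹ * (wB k n).2.2 ≤
        (M ^ r)⁻¹ * cnorm (((List.range n).map (fun i => B3 (k (i + 1)))).prod) :=
      mul_le_mul_of_nonneg_left hBle hMinv
    rw [zpow_neg, zpow_natCast]
    linarith
  unfold cnorm
  apply Finset.sup'_le
  intro j _
  fin_cases j
  · calc ∑ i : Fin 3, |(((List.range n).map (fun i => A3 (k (i + 1)))).prod) i 0|
        = ∑ i, (((List.range n).map (fun i => A3 (k (i + 1)))).prod) i 0 :=
          Finset.sum_congr rfl fun i _ => abs_of_nonneg (hPA i 0)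
      _ = (vA k n).1 := a0
      _ ≤ _ := key _ f7
  · calc ∑ i : Fin 3, |(((List.range n).map (fun i => A3 (k (i + 1)))).prod) i 1|
        = ∑ i, (((List.range n).map (fun i => A3 (k (i + 1)))).prod) i 1 :=
          Finset.sum_congr rfl fun i _ => abs_of_nonneg (hPA i 1)
      _ = (vA k n).2.1 := a1
      _ ≤ _ := key _ f8
  · calc ∑ i : Fin 3, |(((List.range n).map (fun i => A3 (k (i + 1)))).prod) i 2|
        = ∑ i, (((List.range n).map (fun i => A3 (k (i + 1)))).prod) i 2 :=
          Finset.sum_congr rfl fun i _ => abs_of_nonneg (hPA i 2)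
      _ = (vA k n).2.2 := a2
      _ ≤ _ := key _ f9
end

section
/- For every integer d ≥ 3, let X = A_d(1)⁻¹·T_{1d}·A_d(1). Then X coincides with the identity matrix except in the lower-right 2×2 block (rows and columns d−1, d), which equals the matrix with rows (2, 1) and (−1, 0); and moreover X⁻¹·T_{d−1,d}·X = T_{d,d−1}⁻¹ = I_d − E_{d,d−1}. -/
/-- The matrix `A_d(k)` (over `ℤ`, indices `0, …, d−1`): `A_d(k)_{0,d−2} = k`,
`A_d(k)_{0,d−1} = k−1`, subdiagonal entries `A_d(k)_{i,i−1} = 1` for `1 ≤ i ≤ d−1`,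
`A_d(k)_{d−1,d−1} = 1`, and all other entries `0`. -/
def Ad (d : ℕ) (k : ℤ) : Matrix (Fin d) (Fin d) ℤ :=
  Matrix.of fun i j =>
    if i.val = 0 then (if j.val = d - 2 then k else if j.val = d - 1 then k - 1 else 0)
    else (if i.val = j.val + 1 then 1 else 0) +
      (if i.val = d - 1 ∧ j.val = d - 1 then 1 else 0)

def Bd (d : ℕ) : Matrix (Fin d) (Fin d) ℤ :=
  Matrix.of fun i j =>
    if i.val < d - 2 then (if j.val = i.val + 1 then 1 else 0)
    else if i.val = d - 2 then (if j.val = 0 then 1 else 0)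
    else if j.val = d - 1 then 1 else if j.val = 0 then -1 else 0

def Xd (d : ℕ) : Matrix (Fin d) (Fin d) ℤ :=
  Matrix.of fun i j =>
    if i.val = d - 2 then (if j.val = d - 2 then 2 else if j.val = d - 1 then 1 else 0)
    else if i.val = d - 1 then (if j.val = d - 2 then -1 else 0)
    else if i = j then 1 else 0

def Xd' (d : ℕ) : Matrix (Fin d) (Fin d) ℤ :=
  Matrix.of fun i j =>
    if i.val = d - 2 then (if j.val = d - 1 then -1 else 0)
    else if i.val = d - 1 then (if j.val = d - 2 then 1 else if j.val = d - 1 then 2 else 0)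
    else if i = j then 1 else 0

lemma sum_ind {d : ℕ} (c : Fin d) (v : ℤ) (f : Fin d → ℤ) :
    (∑ k, (if k = c then v else 0) * f k) = v * f c := by simp [ite_mul]

lemma std_mul_apply {d : ℕ} (i j p q : Fin d) (c : ℤ) (M : Matrix (Fin d) (Fin d) ℤ) :
    (Matrix.single i j c * M) p q = if p = i then c * M j q else 0 := by
  by_cases h : p = i
  · subst h; simp
  · simp [h]

lemma mul_std_apply {d : ℕ} (i j p q : Fin d) (c : ℤ) (M : Matrix (Fin d) (Fin d) ℤ) :
    (M * Matrix.single i j c) p q = if q = j then M p i * c else 0 := by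
  by_cases h : q = j
  · subst h; simp
  · simp [h]

lemma Ad_mul {d : ℕ} (hd : 2 < d) (M : Matrix (Fin d) (Fin d) ℤ) (i j : Fin d) :
    (Ad d 1 * M) i j =
      if i.val = 0 then M ⟨d - 2, by omega⟩ j
      else M ⟨i.val - 1, by omega⟩ j + if i.val = d - 1 then M ⟨d - 1, by omega⟩ j else 0 := by
  rw [Matrix.mul_apply]
  by_cases h0 : i.val = 0
  · have hrow : ∀ k : Fin d, Ad d 1 i k = if k = (⟨d - 2, by omega⟩ : Fin d) then 1 else 0 := by
      intro k
      simp only [Ad, Matrix.of_apply, h0, if_pos rfl]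
      split_ifs <;> (try simp only [Fin.ext_iff] at *) <;> omega
    rw [Finset.sum_congr rfl fun k _ => by rw [hrow k]]
    rw [sum_ind, if_pos h0, one_mul]
  · by_cases hl : i.val = d - 1
    · have hrow : ∀ k : Fin d, Ad d 1 i k =
          (if k = (⟨i.val - 1, by omega⟩ : Fin d) then 1 else 0) +
          (if k = (⟨d - 1, by omega⟩ : Fin d) then 1 else 0) := by
        intro k
        simp only [Ad, Matrix.of_apply, h0, if_neg h0]
        split_ifs <;> (try simp only [Fin.ext_iff] at *) <;> omega
      rw [Finset.sum_congr rfl fun k _ => by rw [hrow k, add_mul]]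
      rw [Finset.sum_add_distrib, sum_ind, sum_ind, if_neg h0, if_pos hl, one_mul, one_mul]
    · have hrow : ∀ k : Fin d, Ad d 1 i k =
          if k = (⟨i.val - 1, by omega⟩ : Fin d) then 1 else 0 := by
        intro k
        simp only [Ad, Matrix.of_apply, h0, if_neg h0]
        split_ifs <;> (try simp only [Fin.ext_iff] at *) <;> omega
      rw [Finset.sum_congr rfl fun k _ => by rw [hrow k]]
      rw [sum_ind, if_neg h0, if_neg hl, one_mul, add_zero]

lemma AB {d : ℕ} (hd : 2 < d) : Ad d 1 * Bd d = 1 := by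
  ext i j
  rw [Ad_mul hd]
  simp only [Bd, Matrix.of_apply, Matrix.one_apply, Fin.ext_iff]
  split_ifs <;> (try simp only [Fin.ext_iff] at *) <;> omega

lemma AX {d : ℕ} (hd : 2 < d) :
    Ad d 1 * Xd d =
      (1 + Matrix.single (⟨0, by omega⟩ : Fin d) (⟨d - 1, by omega⟩ : Fin d) (1 : ℤ)) *
        Ad d 1 := by
  ext i j
  rw [Ad_mul hd, Matrix.add_mul, Matrix.one_mul, Matrix.add_apply, std_mul_apply]
  simp only [Ad, Xd, Matrix.of_apply, Fin.ext_iff, one_mul]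
  split_ifs <;> (try simp only [Fin.ext_iff, true_and, and_true, not_and] at *) <;> omega

lemma XX' {d : ℕ} (hd : 2 < d) : Xd d * Xd' d = 1 := by
  ext i j
  rw [Matrix.mul_apply]
  by_cases ha : i.val = d - 2
  · have hrow : ∀ k : Fin d, Xd d i k =
        (if k = (⟨d - 2, by omega⟩ : Fin d) then 2 else 0) +
        (if k = (⟨d - 1, by omega⟩ : Fin d) then 1 else 0) := by
      intro k
      simp only [Xd, Matrix.of_apply, ha, if_pos rfl]
      split_ifs <;> (try simp only [Fin.ext_iff] at *) <;> omega
    rw [Finset.sum_congr rfl fun k _ => by rw [hrow k, add_mul]]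
    rw [Finset.sum_add_distrib, sum_ind, sum_ind]
    simp only [Xd', Matrix.of_apply, Matrix.one_apply, Fin.ext_iff]
    split_ifs <;> (try simp only [Fin.ext_iff] at *) <;> omega
  · by_cases hb : i.val = d - 1
    · have hrow : ∀ k : Fin d, Xd d i k =
          if k = (⟨d - 2, by omega⟩ : Fin d) then -1 else 0 := by
        intro k
        simp only [Xd, Matrix.of_apply, ha, if_neg ha, hb, if_pos rfl]
        split_ifs <;> (try simp only [Fin.ext_iff] at *) <;> omega
      rw [Finset.sum_congr rfl fun k _ => by rw [hrow k]]
      rw [sum_ind]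
      simp only [Xd', Matrix.of_apply, Matrix.one_apply, Fin.ext_iff]
      split_ifs <;> (try simp only [Fin.ext_iff] at *) <;> omega
    · have hrow : ∀ k : Fin d, Xd d i k = if k = i then 1 else 0 := by
        intro k
        simp only [Xd, Matrix.of_apply, if_neg ha, if_neg hb]
        split_ifs <;> (try simp only [Fin.ext_iff] at *) <;> omega
      rw [Finset.sum_congr rfl fun k _ => by rw [hrow k]]
      rw [sum_ind, one_mul]
      simp only [Xd', Matrix.of_apply, Matrix.one_apply, Fin.ext_iff]
      split_ifs <;> (try simp only [Fin.ext_iff] at *) <;> omega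

lemma TX {d : ℕ} (hd : 2 < d) :
    (1 + Matrix.single (⟨d - 2, by omega⟩ : Fin d) (⟨d - 1, by omega⟩ : Fin d) (1 : ℤ)) *
        Xd d =
      Xd d * (1 - Matrix.single (⟨d - 1, by omega⟩ : Fin d) (⟨d - 2, by omega⟩ : Fin d)
        (1 : ℤ)) := by
  ext i j
  rw [Matrix.add_mul, Matrix.one_mul, Matrix.mul_sub, Matrix.mul_one, Matrix.add_apply,
    Matrix.sub_apply, std_mul_apply, mul_std_apply]
  simp only [Xd, Matrix.of_apply, Fin.ext_iff, one_mul, mul_one]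
  split_ifs <;> (try simp only [Fin.ext_iff] at *) <;> omega

/-- Let `X = A_d(1)⁻¹·T_{1d}·A_d(1)`.  Then `X` coincides with the identity outside the
lower-right `2×2` block (rows and columns `d−1`, `d`, 1-indexed), where it equals the matrix
with rows `(2, 1)` and `(−1, 0)`; moreover `X⁻¹·T_{d−1,d}·X = T_{d,d−1}⁻¹ = I_d − E_{d,d−1}`. -/
theorem Ad_X_block (d : ℕ) (hd : 3 ≤ d)
    (X : Matrix (Fin d) (Fin d) ℤ)
    (hX : X = (Ad d 1)⁻¹ *
      (1 + Matrix.single (⟨0, by omega⟩ : Fin d) (⟨d - 1, by omega⟩ : Fin d) (1 : ℤ)) *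
      Ad d 1) :
    (∀ i j : Fin d, (i.val < d - 2 ∨ j.val < d - 2) → X i j = (1 : Matrix (Fin d) (Fin d) ℤ) i j) ∧
    X ⟨d - 2, by omega⟩ ⟨d - 2, by omega⟩ = 2 ∧
    X ⟨d - 2, by omega⟩ ⟨d - 1, by omega⟩ = 1 ∧
    X ⟨d - 1, by omega⟩ ⟨d - 2, by omega⟩ = -1 ∧
    X ⟨d - 1, by omega⟩ ⟨d - 1, by omega⟩ = 0 ∧
    X⁻¹ * (1 + Matrix.single (⟨d - 2, by omega⟩ : Fin d) (⟨d - 1, by omega⟩ : Fin d) (1 : ℤ)) * X =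
      1 - Matrix.single (⟨d - 1, by omega⟩ : Fin d) (⟨d - 2, by omega⟩ : Fin d) (1 : ℤ) := by
  have hAinv : (Ad d 1)⁻¹ = Bd d := Matrix.inv_eq_right_inv (AB hd)
  have hBA : Bd d * Ad d 1 = 1 := mul_eq_one_comm.mp (AB hd)
  have hXeq : X = Xd d := by
    rw [hX, hAinv, Matrix.mul_assoc, ← AX hd, ← Matrix.mul_assoc, hBA, Matrix.one_mul]
  have hXinv : X⁻¹ = Xd' d := by
    rw [hXeq]; exact Matrix.inv_eq_right_inv (XX' hd)
  subst hXeq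
  refine ⟨?_, ?_, ?_, ?_, ?_, ?_⟩
  · intro i j hij
    simp only [Xd, Matrix.of_apply, Matrix.one_apply, Fin.ext_iff]
    split_ifs <;> (try simp only [Fin.ext_iff] at *) <;> omega
  · simp only [Xd, Matrix.of_apply]; split_ifs <;> (try simp only [Fin.ext_iff] at *) <;> omega
  · simp only [Xd, Matrix.of_apply]; split_ifs <;> (try simp only [Fin.ext_iff] at *) <;> omega
  · simp only [Xd, Matrix.of_apply]; split_ifs <;> (try simp only [Fin.ext_iff] at *) <;> omega
  · simp only [Xd, Matrix.of_apply]; split_ifs <;> (try simp only [Fin.ext_iff] at *) <;> omega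
  · rw [hXinv, Matrix.mul_assoc, TX hd, ← Matrix.mul_assoc,
      mul_eq_one_comm.mp (XX' hd), Matrix.one_mul]
end
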